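/- arXiv:math/0607521 — 2 statements merged into one kernel-verified Lean document; each statement's English description precedes it below -/
import Mathlib

section
/- Let ω be a symmetric (2,2)-double form on V, let (e₁,…,e_n) be the orthonormal basis of V used in defining the Weitzenböck transformation, and let 1 ≤ p ≤ n. Then N_p(ω)(e₁∧…∧e_p, e₁∧…∧e_p) = Σ_{i=1}^p Σ_{j=p+1}^n ω(e_i∧e_j, e_i∧e_j). -/
open scoped BigOperators RealInnerProductSpace

namespace Weitzenbock

variable (V : Type) [NormedAddCommGroup V] [InnerProductSpace ℝ V]

/-- A "raw" double form of bidegree `(p,q)`: a real-valued function of a `p`-tuple and a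
`q`-tuple of vectors.  A genuine double form (an `ℝ`-bilinear form on `⋀ᵖV × ⋀^qV`) is the
same thing as such a function which is multilinear and alternating in each block of
arguments; this regularity is encoded by the type `DF` below. -/
abbrev DFr (p q : ℕ) : Type _ := (Fin p → V) → (Fin q → V) → ℝ

/-- A double form of bidegree `(p,q)` on `V`: an alternating multilinear map in `p` vector
arguments with values in alternating multilinear maps in `q` vector arguments; this is
exactly the data of a bilinear form `⋀ᵖV × ⋀^qV → ℝ`. -/
abbrev DF (p q : ℕ) : Type _ :=
  AlternatingMap ℝ V (AlternatingMap ℝ V ℝ (Fin q)) (Fin p)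

variable {V}

/-- The underlying raw double form of a double form. -/
def rawDF {p q : ℕ} (ω : DF V p q) : DFr V p q := fun x y => ω x y

/-- Transport a raw double form along equalities of the degrees. -/
def castDF {a b c d : ℕ} (h1 : a = b) (h2 : c = d) (ω : DFr V a c) : DFr V b d :=
  fun x y => ω (fun i => x (Fin.cast h1 i)) (fun j => y (Fin.cast h2 j))

/-- The Kulkarni–Nomizu product of double forms (in raw form):
`(ω₁·ω₂)(x₁∧…∧x_{p+r}, y₁∧…∧y_{q+s}) = (1/(p!r!q!s!)) Σ_{σ,ρ} ε(σ)ε(ρ)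
ω₁(x_{σ(1)}∧…∧x_{σ(p)}, y_{ρ(1)}∧…∧y_{ρ(q)}) ω₂(x_{σ(p+1)}∧…, y_{ρ(q+1)}∧…)`. -/
noncomputable def KN (p r q s : ℕ) (ω₁ : DFr V p q) (ω₂ : DFr V r s) :
    DFr V (p + r) (q + s) := fun x y =>
  ((p.factorial * r.factorial * q.factorial * s.factorial : ℕ) : ℝ)⁻¹ *
    ∑ σ : Equiv.Perm (Fin (p + r)), ∑ ρ : Equiv.Perm (Fin (q + s)),
      ((Equiv.Perm.sign σ : ℤ) : ℝ) * ((Equiv.Perm.sign ρ : ℤ) : ℝ) *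
        (ω₁ (fun a => x (σ (Fin.castAdd r a))) (fun c => y (ρ (Fin.castAdd s c))) *
          ω₂ (fun a => x (σ (Fin.natAdd p a))) (fun c => y (ρ (Fin.natAdd q c))))

/-- The metric `g` as a `(1,1)`-double form. -/
noncomputable def gD : DFr V 1 1 := fun x y => (inner ℝ (x 0) (y 0) : ℝ)

/-- The `k`-th Kulkarni–Nomizu power `g^k` of the metric. -/
noncomputable def gpow : (k : ℕ) → DFr V k k
  | 0 => fun _ _ => 1
  | (k + 1) => KN k 1 k 1 (gpow k) gD

/-- A raw `(p,p)`-double form is symmetric if `ω(u,v) = ω(v,u)`. -/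
def Symm (p : ℕ) (ω : DFr V p p) : Prop := ∀ x y, ω x y = ω y x

/-- The first Bianchi identity for a double form of bidegree `(p, q+1)`:
`Σ_{j=1}^{p+1} (−1)^j ω(x₁∧…∧x̂_j∧…∧x_{p+1}, x_j∧y₁∧…∧y_q) = 0`. -/
def Bianchi (p q : ℕ) (ω : DFr V p (q + 1)) : Prop :=
  ∀ (x : Fin (p + 1) → V) (y : Fin q → V),
    ∑ j : Fin (p + 1),
      (-1 : ℝ) ^ ((j : ℕ) + 1) * ω (j.removeNth x) (Fin.cons (x j) y) = 0

variable {n : ℕ}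

/-- The contraction of a double form with respect to an orthonormal basis:
`cω(x₁∧…∧x_p, y₁∧…∧y_q) = Σ_j ω(e_j∧x₁∧…∧x_p, e_j∧y₁∧…∧y_q)`. -/
noncomputable def contr (b : OrthonormalBasis (Fin n) ℝ V) (p q : ℕ)
    (ω : DFr V (p + 1) (q + 1)) : DFr V p q := fun x y =>
  ∑ j : Fin n, ω (Fin.cons (b j) x) (Fin.cons (b j) y)

/-- Iterated contraction `c^k`. -/
noncomputable def contrIter (b : OrthonormalBasis (Fin n) ℝ V) (p q : ℕ) :
    (k : ℕ) → DFr V (p + k) (q + k) → DFr V p q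
  | 0, ω => ω
  | (k + 1), ω => contrIter b p q k (contr b (p + k) (q + k) ω)

instance (p m : ℕ) : DecidablePred (fun f : Fin p → Fin m => StrictMono f) := fun f =>
  decidable_of_iff (∀ a b : Fin p, a < b → f a < f b)
    ⟨fun h _ _ hab => h _ _ hab, fun h _ _ hab => h hab⟩

/-- The natural inner product of two `(p,q)`-double forms with respect to an orthonormal
basis: `⟨ω₁,ω₂⟩ = Σ_{I,J increasing} ω₁(e_I,e_J) ω₂(e_I,e_J)`. -/
noncomputable def dfInner (b : OrthonormalBasis (Fin n) ℝ V) (p q : ℕ)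
    (ω₁ ω₂ : DFr V p q) : ℝ :=
  ∑ I : {f : Fin p → Fin n // StrictMono f}, ∑ J : {f : Fin q → Fin n // StrictMono f},
    ω₁ (fun a => b (I.1 a)) (fun c => b (J.1 c)) *
      ω₂ (fun a => b (I.1 a)) (fun c => b (J.1 c))

/-- The quadratic form `v ↦ −⟨v,v⟩` on `V`. -/
noncomputable def Qv : QuadraticForm ℝ V :=
  - LinearMap.BilinMap.toQuadraticMap (innerₗ V)

/-- The Clifford algebra of `(V, −⟨·,·⟩)`; via `CliffordAlgebra.equivExterior` it is
identified, as a vector space, with the exterior algebra `ΛV`. -/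
abbrev CA := CliffordAlgebra (Qv (V := V))

/-- A vector of `V` seen inside the Clifford algebra. -/
noncomputable def cvec (v : V) : CA (V := V) := CliffordAlgebra.ι (Qv (V := V)) v

/-- `ad_φ(ψ) = φ·ψ − ψ·φ` (Clifford products). -/
noncomputable def adC (φ ψ : CA (V := V)) : CA (V := V) := φ * ψ - ψ * φ

/-- The identification of the Clifford algebra with the exterior algebra `ΛV`. -/
noncomputable def toExt : CA (V := V) ≃ₗ[ℝ] ExteriorAlgebra ℝ V :=
  CliffordAlgebra.equivExterior (Qv (V := V))

/-- The scalar (degree zero) part of an element of `ΛV ≅ Cl(V)`. -/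
noncomputable def scalarPart (u : CA (V := V)) : ℝ :=
  ExteriorAlgebra.algebraMapInv (toExt u)

/-- The inner product on `ΛV ≅ Cl(V)` for which the wedge products of distinct vectors of
an orthonormal basis are orthonormal: `⟨u,v⟩` is the scalar part of `reverse(involute u)·v`. -/
noncomputable def cinner (u v : CA (V := V)) : ℝ :=
  scalarPart (CliffordAlgebra.reverse (CliffordAlgebra.involute u) * v)

/-- The `p`-vector `x₁ ∧ … ∧ x_p`, viewed in `ΛV ≅ Cl(V)`. -/
noncomputable def wedgeC (p : ℕ) (x : Fin p → V) : CA (V := V) :=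
  toExt.symm (ExteriorAlgebra.ιMulti ℝ p x)

/-- The Weitzenböck transformation of order `p` of a `(2,2)`-double form `ω`, relative to
the orthonormal basis `b`:
`N_p(ω)(ψ₁,ψ₂) = (1/4) Σ_{i<j} Σ_{k<l} ω(e_i∧e_j, e_k∧e_l) ⟨ad_{e_i·e_j}ψ₁, ad_{e_k·e_l}ψ₂⟩`. -/
noncomputable def Nw (b : OrthonormalBasis (Fin n) ℝ V) (p : ℕ) (ω : DFr V 2 2) :
    DFr V p p := fun x y =>
  (4 : ℝ)⁻¹ *
    ∑ i : Fin n, ∑ j : Fin n, ∑ k : Fin n, ∑ l : Fin n,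
      if i < j ∧ k < l then
        ω ![b i, b j] ![b k, b l] *
          cinner (adC (cvec (b i) * cvec (b j)) (wedgeC p x))
            (adC (cvec (b k) * cvec (b l)) (wedgeC p y))
      else 0

/-- A symmetric `(1,1)`-double form is positive definite if it is positive on every
nonzero vector. -/
def posDef11 (F : DFr V 1 1) : Prop := ∀ v : V, v ≠ 0 → 0 < F (fun _ => v) (fun _ => v)

/-! For `e_L = e₁ ⋯ e_p`, a basis vector `e_a` commutes with `e_L` up to the sign
`(-1)^(|L| + [a ∈ L])`, so `ad_{e_i e_j} e_L` vanishes unless exactly one of `i, j` lies in `L`,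
and is then `2 e_i e_j e_L`. Left Clifford multiplication by a vector is skew-adjoint for the
inner product of `ΛV`, and a product of basis vectors in which some index occurs an odd number
of times has zero scalar part; hence the `e_i e_j e_L` with `i ≤ p < j` are orthonormal, and in
`N_p` only the diagonal terms `(i,j) = (k,l)` survive, each contributing
`(1/4)·4·ω(e_i∧e_j, e_i∧e_j)`. -/

lemma Qv_apply (v : V) : Qv v = -⟪v, v⟫ := by
  simp [Qv, LinearMap.BilinMap.toQuadraticMap_apply]

lemma associated_neg_Qv : QuadraticMap.associated (-Qv (V := V)) = innerₗ V := by
  ext v w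
  simp [Qv, QuadraticMap.associated_toQuadraticMap, real_inner_comm w v]
  ring

lemma cvec_mul_self_of_norm_eq_one {v : V} (hv : ‖v‖ = 1) : cvec v * cvec v = -1 := by
  simp [cvec, Qv_apply, hv]

lemma cvec_mul_cvec_of_inner_eq_zero {v w : V} (h : ⟪v, w⟫ = 0) :
    cvec v * cvec w = -(cvec w * cvec v) := by
  have hpolar : QuadraticMap.polar (Qv (V := V)) v w = 0 := by
    simp only [QuadraticMap.polar, Qv_apply, real_inner_add_add_self, h]
    ring
  refine eq_neg_of_add_eq_zero_left ?_
  rw [cvec, cvec, CliffordAlgebra.ι_mul_ι_add_swap, hpolar, map_zero]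

lemma toExt_one : toExt (1 : CA (V := V)) = 1 :=
  CliffordAlgebra.changeForm_one CliffordAlgebra.changeForm.associated_neg_proof

lemma toExt_cvec_mul (v : V) (x : CA (V := V)) :
    toExt (cvec v * x) = ExteriorAlgebra.ι ℝ v * toExt x -
      CliffordAlgebra.contractLeft (innerₗ V v) (toExt x) := by
  rw [← associated_neg_Qv]
  exact CliffordAlgebra.changeForm_ι_mul CliffordAlgebra.changeForm.associated_neg_proof v x

lemma scalarPart_smul (r : ℝ) (x : CA (V := V)) : scalarPart (r • x) = r * scalarPart x := by
  simp [scalarPart]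

lemma scalarPart_neg (x : CA (V := V)) : scalarPart (-x) = -scalarPart x := by
  simp [scalarPart]

lemma cinner_one_left (x : CA (V := V)) : cinner 1 x = scalarPart x := by
  simp [cinner]

lemma cinner_smul_left (r : ℝ) (x y : CA (V := V)) : cinner (r • x) y = r * cinner x y := by
  simp [cinner, scalarPart_smul]

lemma cinner_smul_right (r : ℝ) (x y : CA (V := V)) : cinner x (r • y) = r * cinner x y := by
  simp [cinner, scalarPart_smul]

lemma cinner_zero_left (y : CA (V := V)) : cinner 0 y = 0 := by
  simp [cinner, scalarPart]

lemma cinner_zero_right (x : CA (V := V)) : cinner x 0 = 0 := by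
  simp [cinner, scalarPart]

lemma cinner_cvec_mul_left (v : V) (x y : CA (V := V)) :
    cinner (cvec v * x) y = -cinner x (cvec v * y) := by
  simp [cinner, cvec, CliffordAlgebra.reverse.map_mul, mul_assoc, scalarPart_neg]

lemma cinner_cvec_mul_cvec_mul {v : V} (hv : ‖v‖ = 1) (x y : CA (V := V)) :
    cinner (cvec v * x) (cvec v * y) = cinner x y := by
  rw [cinner_cvec_mul_left, ← mul_assoc, cvec_mul_self_of_norm_eq_one hv, neg_one_mul,
    ← neg_one_smul ℝ y, cinner_smul_right]
  ring

section BasisProd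

variable (b : OrthonormalBasis (Fin n) ℝ V)

noncomputable def basisProd (l : List (Fin n)) : CA (V := V) :=
  (l.map fun i => cvec (b i)).prod

@[simp]
lemma basisProd_nil : basisProd b [] = 1 := rfl

@[simp]
lemma basisProd_cons (a : Fin n) (l : List (Fin n)) :
    basisProd b (a :: l) = cvec (b a) * basisProd b l := by
  simp [basisProd]

lemma basisProd_append (l₁ l₂ : List (Fin n)) :
    basisProd b (l₁ ++ l₂) = basisProd b l₁ * basisProd b l₂ := by
  simp [basisProd]

lemma contractLeft_toExt_basisProd {a : Fin n} {l : List (Fin n)} (ha : a ∉ l) :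
    CliffordAlgebra.contractLeft (innerₗ V (b a)) (toExt (basisProd b l)) = 0 := by
  induction l with
  | nil => simp [toExt_one]
  | cons c l ih =>
    rw [List.mem_cons, not_or] at ha
    simp [toExt_cvec_mul, CliffordAlgebra.contractLeft_ι_mul,
      CliffordAlgebra.contractLeft_comm, b.orthonormal.2 ha.1, ih ha.2]

lemma toExt_basisProd {l : List (Fin n)} (hl : l.Nodup) :
    toExt (basisProd b l) = (l.map fun i => ExteriorAlgebra.ι ℝ (b i)).prod := by
  induction l with
  | nil => simp [toExt_one]
  | cons c l ih =>
    rw [List.nodup_cons] at hl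
    rw [basisProd_cons, toExt_cvec_mul, contractLeft_toExt_basisProd b hl.1, sub_zero, ih hl.2]
    simp

lemma wedgeC_basis_comp {p : ℕ} {f : Fin p → Fin n} (hf : Function.Injective f) :
    wedgeC p (fun a => b (f a)) = basisProd b (List.ofFn f) := by
  rw [wedgeC, LinearEquiv.symm_apply_eq, toExt_basisProd b (List.nodup_ofFn.mpr hf),
    ExteriorAlgebra.ιMulti_apply, List.ofFn_eq_map, List.ofFn_eq_map, List.map_map]
  rfl

lemma scalarPart_cvec_mul_basisProd {a : Fin n} {l : List (Fin n)} (ha : a ∉ l) :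
    scalarPart (cvec (b a) * basisProd b l) = 0 := by
  simp [scalarPart, toExt_cvec_mul, contractLeft_toExt_basisProd b ha,
    ExteriorAlgebra.algebraMapInv]

lemma cvec_mul_basisProd (a : Fin n) (l : List (Fin n)) :
    cvec (b a) * basisProd b l =
      (-1 : ℝ) ^ (l.length + l.count a) • (basisProd b l * cvec (b a)) := by
  induction l with
  | nil => simp
  | cons c l ih =>
    rcases eq_or_ne c a with rfl | hca
    · rw [basisProd_cons, List.length_cons, List.count_cons_self]
      conv_lhs => rw [ih, mul_smul_comm, ← mul_assoc]
      congr 1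
      ring
    · rw [basisProd_cons, ← mul_assoc, cvec_mul_cvec_of_inner_eq_zero (b.orthonormal.2 hca.symm),
        neg_mul, mul_assoc, ih, mul_smul_comm, ← mul_assoc, List.length_cons,
        List.count_cons_of_ne hca, ← neg_smul]
      congr 1
      ring

lemma basisProd_mul_cvec (a : Fin n) (l : List (Fin n)) :
    basisProd b l * cvec (b a) =
      (-1 : ℝ) ^ (l.length + l.count a) • (cvec (b a) * basisProd b l) := by
  rw [cvec_mul_basisProd, smul_smul, ← pow_add, Even.neg_one_pow ⟨_, rfl⟩, one_smul]

lemma exists_basisProd_eq_smul_cvec_mul_erase {a : Fin n} {l : List (Fin n)} (ha : a ∈ l) :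
    ∃ s : ℝ, basisProd b l = s • (cvec (b a) * basisProd b (l.erase a)) := by
  obtain ⟨l₁, l₂, -, rfl, herase⟩ := List.exists_erase_eq ha
  refine ⟨(-1) ^ (l₁.length + l₁.count a), ?_⟩
  rw [herase, basisProd_append, basisProd_cons, ← mul_assoc, basisProd_mul_cvec, smul_mul_assoc,
    mul_assoc, basisProd_append]

lemma scalarPart_basisProd_of_odd {a : Fin n} {l : List (Fin n)} (h : Odd (l.count a)) :
    scalarPart (basisProd b l) = 0 := by
  obtain ⟨k, hk⟩ := h
  induction k generalizing l with
  | zero =>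
    obtain ⟨s, hs⟩ := exists_basisProd_eq_smul_cvec_mul_erase b (a := a) (l := l)
      (List.count_pos_iff.mp (by omega))
    rw [hs, scalarPart_smul, scalarPart_cvec_mul_basisProd b (List.count_eq_zero.mp (by simp [hk])),
      mul_zero]
  | succ k ih =>
    obtain ⟨s, hs⟩ := exists_basisProd_eq_smul_cvec_mul_erase b (a := a) (l := l)
      (List.count_pos_iff.mp (by omega))
    obtain ⟨t, ht⟩ := exists_basisProd_eq_smul_cvec_mul_erase b (a := a) (l := l.erase a)
      (List.count_pos_iff.mp (by rw [List.count_erase_self]; omega))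
    rw [hs, ht, mul_smul_comm, ← mul_assoc, cvec_mul_self_of_norm_eq_one (b.orthonormal.1 a),
      neg_one_mul]
    simp [scalarPart_smul, scalarPart_neg, ih (l := (l.erase a).erase a)
      (by rw [List.count_erase_self, List.count_erase_self]; omega)]

lemma cinner_basisProd_eq_zero_of_odd {a : Fin n} {u w : List (Fin n)}
    (h : Odd (u.count a + w.count a)) : cinner (basisProd b u) (basisProd b w) = 0 := by
  induction u generalizing w with
  | nil => simpa [cinner_one_left] using scalarPart_basisProd_of_odd b (by simpa using h)
  | cons c u ih =>
    rw [basisProd_cons, cinner_cvec_mul_left, ← basisProd_cons, ih, neg_zero]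
    simpa [List.count_cons, add_right_comm, add_assoc] using h

lemma cinner_basisProd_self (l : List (Fin n)) : cinner (basisProd b l) (basisProd b l) = 1 := by
  induction l with
  | nil => simp [cinner_one_left, scalarPart, toExt_one]
  | cons c l ih => rw [basisProd_cons, cinner_cvec_mul_cvec_mul (b.orthonormal.1 c), ih]

lemma basisProd_mul_cvec_mul_cvec (i j : Fin n) (l : List (Fin n)) :
    basisProd b l * (cvec (b i) * cvec (b j)) =
      (-1 : ℝ) ^ (l.count i + l.count j) • (cvec (b i) * cvec (b j) * basisProd b l) := by
  rw [← mul_assoc, basisProd_mul_cvec, smul_mul_assoc, mul_assoc, basisProd_mul_cvec,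
    mul_smul_comm, smul_smul, ← mul_assoc, ← pow_add,
    show l.length + l.count i + (l.length + l.count j) = l.count i + l.count j + 2 * l.length
      by ring, pow_add, pow_mul]
  simp

lemma adC_cvec_mul_cvec_basisProd (i j : Fin n) (l : List (Fin n)) :
    adC (cvec (b i) * cvec (b j)) (basisProd b l) =
      (1 - (-1 : ℝ) ^ (l.count i + l.count j)) • (cvec (b i) * cvec (b j) * basisProd b l) := by
  rw [adC, basisProd_mul_cvec_mul_cvec, sub_smul, one_smul]

lemma adC_cvec_mul_cvec_basisProd_of_mem_iff {i j : Fin n} {l : List (Fin n)} (hl : l.Nodup)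
    (h : i ∈ l ↔ j ∈ l) : adC (cvec (b i) * cvec (b j)) (basisProd b l) = 0 := by
  have hcount : l.count i = l.count j := by
    by_cases hi : i ∈ l
    · rw [List.count_eq_one_of_mem hl hi, List.count_eq_one_of_mem hl (h.mp hi)]
    · rw [List.count_eq_zero.mpr hi, List.count_eq_zero.mpr (mt h.mpr hi)]
  rw [adC_cvec_mul_cvec_basisProd, hcount, ← two_mul, pow_mul, neg_one_sq, one_pow, sub_self,
    zero_smul]

lemma adC_cvec_mul_cvec_basisProd_of_mem_of_not_mem {i j : Fin n} {l : List (Fin n)}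
    (hl : l.Nodup) (hi : i ∈ l) (hj : j ∉ l) :
    adC (cvec (b i) * cvec (b j)) (basisProd b l) =
      (2 : ℝ) • (cvec (b i) * cvec (b j) * basisProd b l) := by
  rw [adC_cvec_mul_cvec_basisProd, List.count_eq_one_of_mem hl hi, List.count_eq_zero.mpr hj]
  norm_num

lemma cinner_cvec_mul_cvec_mul_basisProd {i j k m : Fin n} {l : List (Fin n)}
    (hi : i ∈ l) (hj : j ∉ l) (hk : k ∈ l) (hm : m ∉ l) :
    cinner (cvec (b i) * cvec (b j) * basisProd b l) (cvec (b k) * cvec (b m) * basisProd b l) =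
      if i = k ∧ j = m then 1 else 0 := by
  split_ifs with h
  · obtain ⟨rfl, rfl⟩ := h
    rw [mul_assoc, cinner_cvec_mul_cvec_mul (b.orthonormal.1 i),
      cinner_cvec_mul_cvec_mul (b.orthonormal.1 j), cinner_basisProd_self]
  · have hprod : cvec (b j) * (cvec (b i) * (cvec (b k) * cvec (b m) * basisProd b l)) =
        basisProd b (j :: i :: k :: m :: l) := by
      simp [mul_assoc]
    rw [mul_assoc, cinner_cvec_mul_left, cinner_cvec_mul_left, neg_neg, hprod]
    have hij : i ≠ j := fun e => hj (e ▸ hi)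
    have hkj : k ≠ j := fun e => hj (e ▸ hk)
    by_cases hjm : j = m
    · subst hjm
      have hki : k ≠ i := fun e => h ⟨e.symm, rfl⟩
      apply cinner_basisProd_eq_zero_of_odd b (a := i)
      simp only [List.count_cons, beq_iff_eq, hij.symm, hki, if_true, if_false]
      exact ⟨l.count i, by ring⟩
    · apply cinner_basisProd_eq_zero_of_odd b (a := j)
      simp [hij, hkj, Ne.symm hjm, List.count_eq_zero.mpr hj]

lemma cinner_adC_basisProd {i j k m : Fin n} {l : List (Fin n)} (hl : l.Nodup)
    (hi : i ∈ l) (hj : j ∉ l) (hk : k ∈ l) (hm : m ∉ l) :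
    cinner (adC (cvec (b i) * cvec (b j)) (basisProd b l))
        (adC (cvec (b k) * cvec (b m)) (basisProd b l)) = if i = k ∧ j = m then 4 else 0 := by
  rw [adC_cvec_mul_cvec_basisProd_of_mem_of_not_mem b hl hi hj,
    adC_cvec_mul_cvec_basisProd_of_mem_of_not_mem b hl hk hm, cinner_smul_left, cinner_smul_right,
    cinner_cvec_mul_cvec_mul_basisProd b hi hj hk hm]
  split_ifs <;> norm_num

lemma mem_ofFn_castLE {p : ℕ} (hpn : p ≤ n) {a : Fin n} :
    a ∈ List.ofFn (Fin.castLE hpn) ↔ (a : ℕ) < p := by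
  rw [List.mem_ofFn', Fin.range_castLE]
  rfl

lemma cinner_adC_wedgeC_castLE {p : ℕ} (hpn : p ≤ n) {i j k m : Fin n} (hij : i < j)
    (hkm : k < m) :
    cinner (adC (cvec (b i) * cvec (b j)) (wedgeC p fun a => b (Fin.castLE hpn a)))
        (adC (cvec (b k) * cvec (b m)) (wedgeC p fun a => b (Fin.castLE hpn a))) =
      if i = k ∧ j = m ∧ (i : ℕ) < p ∧ p ≤ (j : ℕ) then 4 else 0 := by
  have hL : (List.ofFn (Fin.castLE hpn)).Nodup := List.nodup_ofFn.mpr (Fin.castLE_injective hpn)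
  have hmem (a : Fin n) := mem_ofFn_castLE hpn (a := a)
  have hij' : (i : ℕ) < j := hij
  have hkm' : (k : ℕ) < m := hkm
  rw [wedgeC_basis_comp b (Fin.castLE_injective hpn)]
  by_cases hI : (i : ℕ) < p ∧ p ≤ (j : ℕ)
  · by_cases hK : (k : ℕ) < p ∧ p ≤ (m : ℕ)
    · rw [cinner_adC_basisProd b hL ((hmem i).2 hI.1) (by rw [hmem]; omega) ((hmem k).2 hK.1)
        (by rw [hmem]; omega)]
      simp [hI]
    · rw [adC_cvec_mul_cvec_basisProd_of_mem_iff b (i := k) (j := m) hL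
        (by rw [hmem, hmem]; omega), cinner_zero_right, if_neg]
      rintro ⟨rfl, rfl, -⟩
      exact hK hI
  · rw [adC_cvec_mul_cvec_basisProd_of_mem_iff b hL (by rw [hmem, hmem]; omega),
      cinner_zero_left, if_neg (by tauto)]

end BasisProd

variable (V)

theorem weitzenbock_sectional (n : ℕ) (b : OrthonormalBasis (Fin n) ℝ V)
    (ω : DF V 2 2) (p : ℕ) (hpn : p ≤ n) :
    Nw b p (rawDF ω) (fun a => b (Fin.castLE hpn a)) (fun a => b (Fin.castLE hpn a)) =
      ∑ i : Fin n, ∑ j : Fin n,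
        if (i : ℕ) < p ∧ p ≤ (j : ℕ) then rawDF ω ![b i, b j] ![b i, b j] else 0 := by
  have hterm (i j k m : Fin n) :
      (if i < j ∧ k < m then rawDF ω ![b i, b j] ![b k, b m] *
          cinner (adC (cvec (b i) * cvec (b j)) (wedgeC p fun a => b (Fin.castLE hpn a)))
            (adC (cvec (b k) * cvec (b m)) (wedgeC p fun a => b (Fin.castLE hpn a)))
        else 0) =
      if m = j ∧ k = i ∧ (i : ℕ) < p ∧ p ≤ (j : ℕ) then 4 * rawDF ω ![b i, b j] ![b i, b j]
      else 0 := by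
    by_cases h : i < j ∧ k < m
    · rw [if_pos h, cinner_adC_wedgeC_castLE b hpn h.1 h.2]
      by_cases hd : m = j ∧ k = i
      · obtain ⟨rfl, rfl⟩ := hd
        simp only [true_and]
        split_ifs <;> ring
      · rw [if_neg fun h' => hd ⟨h'.2.1.symm, h'.1.symm⟩, if_neg fun h' => hd ⟨h'.1, h'.2.1⟩,
          mul_zero]
    · rw [if_neg h, if_neg]
      rintro ⟨rfl, rfl, hi, hj⟩
      exact h ⟨Fin.lt_def.mpr (by omega), Fin.lt_def.mpr (by omega)⟩
  simp only [Nw, hterm, ite_and, Finset.sum_ite_eq', Finset.mem_univ, if_true, Finset.mul_sum]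
  simp [mul_ite]

end Weitzenbock
end

section
/- Let ω be a symmetric (2,2)-double form on V, let 2 ≤ p ≤ n, and let (e₁,…,e_n) be an orthonormal basis of V. Then Σ_{i=1}^p Σ_{j=p+1}^n ω(e_i∧e_j, e_i∧e_j) = (g^{p−1}·(cω)/(p−1)! − 2 g^{p−2}·ω/(p−2)!)(e₁∧…∧e_p, e₁∧…∧e_p), where the products are Kulkarni–Nomizu products. -/
open scoped BigOperators RealInnerProductSpace

namespace Weitzenbock

variable (V : Type) [NormedAddCommGroup V] [InnerProductSpace ℝ V]

variable {V}

variable {n : ℕ}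

/-!
For an orthonormal family `x`, `g^k(x∘σ, x∘ρ)` is `k!` times the Gram determinant of the two
subfamilies, which vanishes unless they consist of the same vectors. Hence in `(g^k·F)(x, x)` only
the permutations preserving the splitting into the first `k` and the last `r` slots contribute,
and `(g^k·F)(x, x) = (1/r!) Σ_σ F(x_{σ(k+1)},…; x_{σ(k+1)},…)`. Counting permutations then gives
`(g^{p-1}·cω)(e₁,…,e_p) = (p-1)! Σ_{a ≤ p} cω(e_a, e_a)` and
`2 (g^{p-2}·ω)(e₁,…,e_p) = (p-2)! Σ_{a,b ≤ p} ω(e_a∧e_b, e_a∧e_b)`. Expanding the contraction over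
the whole basis, the second sum cancels the terms of the first with both indices at most `p`,
leaving the pairs `a ≤ p < b`.
-/

open Equiv Finset
open scoped Nat

local notation "ε" σ:max => ((Equiv.Perm.sign σ : ℤ) : ℝ)

lemma intCast_sign_mul_self {α : Type*} [DecidableEq α] [Fintype α] (σ : Perm α) :
    ε σ * ε σ = 1 := by
  rw [← Int.cast_mul, ← Units.val_mul, Int.units_mul_self, Units.val_one, Int.cast_one]

def blockPerm {k r : ℕ} (τ : Perm (Fin k)) (μ : Perm (Fin r)) : Perm (Fin (k + r)) :=
  finSumFinEquiv.permCongr (τ.sumCongr μ)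

section blockPerm

variable {k r : ℕ} (τ : Perm (Fin k)) (μ : Perm (Fin r))

@[simp]
lemma blockPerm_castAdd (i : Fin k) : blockPerm τ μ (Fin.castAdd r i) = Fin.castAdd r (τ i) := by
  simp [blockPerm, Equiv.permCongr_apply]

@[simp]
lemma blockPerm_natAdd (c : Fin r) : blockPerm τ μ (Fin.natAdd k c) = Fin.natAdd k (μ c) := by
  simp [blockPerm, Equiv.permCongr_apply]

lemma sign_blockPerm : Perm.sign (blockPerm τ μ) = Perm.sign τ * Perm.sign μ := by
  rw [blockPerm, Perm.sign_permCongr, Perm.sign_sumCongr]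

lemma blockPerm_injective :
    Function.Injective fun τμ : Perm (Fin k) × Perm (Fin r) => blockPerm τμ.1 τμ.2 := by
  intro τμ τμ' h
  exact Perm.sumCongrHom_injective ((finSumFinEquiv.permCongr).injective h)

end blockPerm

lemma exists_blockPerm_eq {k r : ℕ} (π : Perm (Fin (k + r)))
    (h : ∀ i, ∃ j, π (Fin.castAdd r i) = Fin.castAdd r j) :
    ∃ τ μ, blockPerm τ μ = π := by
  have hmaps : Set.MapsTo (finSumFinEquiv.symm.permCongr π) (Set.range Sum.inl)
      (Set.range Sum.inl) := by
    rintro _ ⟨i, rfl⟩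
    obtain ⟨j, hj⟩ := h i
    exact ⟨j, by simp [Equiv.permCongr_apply, hj]⟩
  obtain ⟨⟨τ, μ⟩, hτμ⟩ := Perm.mem_sumCongrHom_range_of_perm_mapsTo_inl hmaps
  refine ⟨τ, μ, ?_⟩
  rw [Perm.sumCongrHom_apply] at hτμ
  rw [blockPerm, hτμ, ← Equiv.permCongr_symm, Equiv.apply_symm_apply]

def gram {ι : Type*} (x y : ι → V) : Matrix ι ι ℝ := Matrix.of fun i j => ⟪x i, y j⟫

section gram

variable {ι : Type*} [Fintype ι] [DecidableEq ι]

lemma det_gram_eq_sum (x y : ι → V) :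
    (gram x y).det = ∑ π : Perm ι, ε π * ∏ i, ⟪x i, y (π i)⟫ := by
  rw [← Matrix.det_transpose, Matrix.det_apply']
  rfl

lemma sum_sign_mul_sign_mul_prod_inner (x y : ι → V) :
    ∑ σ : Perm ι, ∑ ρ : Perm ι, ε σ * ε ρ * ∏ j, ⟪x (σ j), y (ρ j)⟫ =
      (Fintype.card ι)! * (gram x y).det := by
  have h (σ : Perm ι) :
      ∑ ρ : Perm ι, ε σ * ε ρ * ∏ j, ⟪x (σ j), y (ρ j)⟫ = (gram x y).det := by
    rw [det_gram_eq_sum, ← Equiv.sum_comp (Equiv.mulRight σ)]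
    refine sum_congr rfl fun π _ => ?_
    have hprod : ∏ j, ⟪x (σ j), y ((π * σ) j)⟫ = ∏ i, ⟪x i, y (π i)⟫ :=
      Equiv.prod_comp σ fun i => ⟪x i, y (π i)⟫
    rw [coe_mulRight, hprod, Perm.sign_mul, Units.val_mul, Int.cast_mul]
    linear_combination (ε π * ∏ i, ⟪x i, y (π i)⟫) * intCast_sign_mul_self σ
  simp [h, Fintype.card_perm]

end gram

theorem gpow_apply (k : ℕ) (x y : Fin k → V) : gpow k x y = k ! * (gram x y).det := by
  induction k with
  | zero => simp [gpow]
  | succ k ih =>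
    set T : Perm (Fin (k + 1)) → Perm (Fin (k + 1)) → ℝ :=
      fun σ ρ => ε σ * ε ρ * ∏ j, ⟪x (σ j), y (ρ j)⟫ with hT
    have expand (σ ρ : Perm (Fin (k + 1))) :
        ε σ * ε ρ *
          (gpow k (fun a => x (σ (Fin.castAdd 1 a))) (fun c => y (ρ (Fin.castAdd 1 c))) *
            gD (fun a => x (σ (Fin.natAdd k a))) (fun c => y (ρ (Fin.natAdd k c)))) =
        k ! * ∑ τ : Perm (Fin k), T σ (ρ * blockPerm τ 1) := by
      rw [ih, det_gram_eq_sum, mul_sum, sum_mul, mul_sum, mul_sum]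
      refine sum_congr rfl fun τ _ => ?_
      simp only [hT, gD, Fin.prod_univ_add, Fin.prod_univ_one, Perm.mul_apply,
        blockPerm_castAdd, blockPerm_natAdd, Perm.sign_mul, sign_blockPerm, Perm.sign_one,
        mul_one, Units.val_mul, Int.cast_mul, Perm.one_apply]
      ring
    have reindex (τ : Perm (Fin k)) :
        ∑ σ, ∑ ρ, T σ (ρ * blockPerm τ 1) = (k + 1)! * (gram x y).det := by
      have h := sum_sign_mul_sign_mul_prod_inner x y
      rw [Fintype.card_fin] at h
      rw [← h]
      exact sum_congr rfl fun σ _ => Equiv.sum_comp (Equiv.mulRight (blockPerm τ 1)) (T σ)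
    have hk : (k ! : ℝ) ≠ 0 := by positivity
    simp only [gpow, KN, expand, ← mul_sum]
    rw [sum_congr rfl fun σ _ => sum_comm, sum_comm]
    simp only [reindex, sum_const, card_univ, Fintype.card_perm, Fintype.card_fin, nsmul_eq_mul,
      Nat.factorial_one, mul_one]
    push_cast [Nat.factorial_succ]
    field_simp

lemma castAdd_ne_natAdd {k r : ℕ} (i : Fin k) (c : Fin r) : Fin.castAdd r i ≠ Fin.natAdd k c :=
  Fin.ne_of_val_ne (by simp only [Fin.val_castAdd, Fin.val_natAdd]; omega)

lemma sum_sign_mul_det_gram_mul {k r : ℕ} {x : Fin (k + r) → V} (hx : Orthonormal ℝ x)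
    (F : DFr V r r) (hF : ∀ u v (μ : Perm (Fin r)), F u (v ∘ μ) = ε μ * F u v) :
    ∑ π : Perm (Fin (k + r)), ε π *
        ((gram (fun a => x (Fin.castAdd r a)) (fun a => x (π (Fin.castAdd r a)))).det *
          F (fun c => x (Fin.natAdd k c)) (fun c => x (π (Fin.natAdd k c)))) =
      k ! * r ! * F (fun c => x (Fin.natAdd k c)) (fun c => x (Fin.natAdd k c)) := by
  have hinner := orthonormal_iff_ite.mp hx
  set u : Fin r → V := fun c => x (Fin.natAdd k c)
  refine (Fintype.sum_of_injective _ blockPerm_injective (fun _ => F u u) _ ?vanish ?onBlock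
    ).symm.trans (by simp [Fintype.card_perm])
  case vanish =>
    intro π hπ
    obtain ⟨i, hi⟩ : ∃ i, ∀ j, π (Fin.castAdd r i) ≠ Fin.castAdd r j := by
      by_contra! h
      obtain ⟨τ, μ, hτμ⟩ := exists_blockPerm_eq π h
      exact hπ ⟨(τ, μ), hτμ⟩
    obtain ⟨c, hc⟩ : ∃ c, π (Fin.castAdd r i) = Fin.natAdd k c :=
      Fin.addCases
        (motive := fun t => π (Fin.castAdd r i) = t → ∃ c, π (Fin.castAdd r i) = Fin.natAdd k c)
        (fun j hj => (hi j hj).elim) (fun c hc => ⟨c, hc⟩) _ rfl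
    rw [Matrix.det_eq_zero_of_column_eq_zero i fun j => by
      rw [gram, Matrix.of_apply, hc, hinner, if_neg (castAdd_ne_natAdd j c)], zero_mul, mul_zero]
  case onBlock =>
    rintro ⟨τ, μ⟩
    have hgram :
        gram (fun a => x (Fin.castAdd r a)) (fun a => x (blockPerm τ μ (Fin.castAdd r a))) =
          (1 : Matrix (Fin k) (Fin k) ℝ).submatrix id τ := by
      ext i j
      simp [gram, hinner, Matrix.one_apply]
    have hFμ : F u (fun c => x (Fin.natAdd k (μ c))) = ε μ * F u u := hF u u μ
    simp only [blockPerm_natAdd]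
    rw [hgram, Matrix.det_permute', Matrix.det_one, sign_blockPerm, Units.val_mul, Int.cast_mul,
      hFμ]
    linear_combination
      (-(ε μ * ε μ) * F u u) * intCast_sign_mul_self τ - F u u * intCast_sign_mul_self μ

theorem KN_gpow_apply_of_orthonormal {k r : ℕ} {x : Fin (k + r) → V} (hx : Orthonormal ℝ x)
    (F : DFr V r r) (hF : ∀ u v (μ : Perm (Fin r)), F u (v ∘ μ) = ε μ * F u v) :
    KN k r k r (gpow k) F x x = (r ! : ℝ)⁻¹ *
      ∑ σ : Perm (Fin (k + r)),
        F (fun c => x (σ (Fin.natAdd k c))) (fun c => x (σ (Fin.natAdd k c))) := by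
  have inner (σ : Perm (Fin (k + r))) :
      ∑ ρ : Perm (Fin (k + r)), ε σ * ε ρ *
        (gpow k (fun a => x (σ (Fin.castAdd r a))) (fun c => x (ρ (Fin.castAdd r c))) *
          F (fun a => x (σ (Fin.natAdd k a))) (fun c => x (ρ (Fin.natAdd k c)))) =
      k ! * (k ! * r ! *
        F (fun c => x (σ (Fin.natAdd k c))) (fun c => x (σ (Fin.natAdd k c)))) := by
    have h := sum_sign_mul_det_gram_mul (hx.comp σ σ.injective) F hF
    simp only [Function.comp_apply] at h
    rw [← h, mul_sum, ← Equiv.sum_comp (Equiv.mulLeft σ)]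
    refine sum_congr rfl fun π _ => ?_
    rw [gpow_apply, coe_mulLeft, Perm.sign_mul, Units.val_mul, Int.cast_mul]
    simp only [Perm.mul_apply]
    rw [← mul_assoc (ε σ) (ε σ), intCast_sign_mul_self, one_mul]
    ring
  have hk : (k ! : ℝ) ≠ 0 := by positivity
  have hr : (r ! : ℝ) ≠ 0 := by positivity
  simp only [KN, inner, ← mul_sum]
  push_cast
  field_simp

lemma sum_perm_apply_zero {p : ℕ} (h : Fin (p + 1) → ℝ) :
    ∑ σ : Perm (Fin (p + 1)), h (σ 0) = p ! * ∑ a, h a := by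
  rw [← Equiv.sum_comp Perm.decomposeFin.symm, Fintype.sum_prod_type]
  simp [Perm.decomposeFin_symm_apply_zero, Fintype.card_perm, mul_sum]

lemma sum_perm_apply_zero_one {p : ℕ} (H : Fin (p + 2) → Fin (p + 2) → ℝ) :
    ∑ σ : Perm (Fin (p + 2)), H (σ 0) (σ 1) = p ! * ∑ a, (∑ b, H a b - H a a) := by
  rw [← Equiv.sum_comp Perm.decomposeFin.symm, Fintype.sum_prod_type, mul_sum]
  refine sum_congr rfl fun a _ => ?_
  rw [show (1 : Fin (p + 2)) = Fin.succ 0 from rfl]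
  simp only [Perm.decomposeFin_symm_apply_zero, Perm.decomposeFin_symm_apply_succ]
  have hrow : ∑ b, H a b = H a a + ∑ c : Fin (p + 1), H a (swap 0 a c.succ) := by
    rw [← Equiv.sum_comp (swap 0 a) (H a), Fin.sum_univ_succ, swap_apply_left]
  rw [sum_perm_apply_zero fun c => H a (swap 0 a c.succ), hrow]
  ring

lemma rawDF_comp_perm_apply {r s : ℕ} (ω : DF V r s) (u : Fin r → V) (v : Fin s → V)
    (μ : Perm (Fin r)) : rawDF ω (u ∘ μ) v = ε μ * rawDF ω u v := by
  simp [rawDF, AlternatingMap.map_perm, Units.smul_def, zsmul_eq_mul]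

lemma rawDF_apply_comp_perm {r s : ℕ} (ω : DF V r s) (u : Fin r → V) (v : Fin s → V)
    (μ : Perm (Fin s)) : rawDF ω u (v ∘ μ) = ε μ * rawDF ω u v := by
  simp [rawDF, AlternatingMap.map_perm, Units.smul_def, zsmul_eq_mul]

lemma rawDF_apply_same {q : ℕ} (ω : DF V 2 q) (v : V) (y : Fin q → V) :
    rawDF ω ![v, v] y = 0 := by
  simp [rawDF, ω.map_eq_zero_of_eq ![v, v] (i := 0) (j := 1) rfl (by decide)]

lemma rawDF_apply_swap (ω : DF V 2 2) (u v : V) :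
    rawDF ω ![v, u] ![v, u] = rawDF ω ![u, v] ![u, v] := by
  have hswap : ![v, u] = ![u, v] ∘ swap 0 1 := by
    funext c
    fin_cases c <;> rfl
  rw [hswap, rawDF_apply_comp_perm, rawDF_comp_perm_apply, ← mul_assoc, intCast_sign_mul_self,
    one_mul]

theorem KN_gpow_one_apply {k : ℕ} {x : Fin (k + 1) → V} (hx : Orthonormal ℝ x) (F : DFr V 1 1) :
    KN k 1 k 1 (gpow k) F x x = k ! * ∑ m, F (fun _ => x m) (fun _ => x m) := by
  rw [KN_gpow_apply_of_orthonormal hx F fun u v μ => by simp [Subsingleton.elim μ 1]]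
  have hlast (σ : Perm (Fin (k + 1))) :
      (fun c : Fin 1 => x (σ (Fin.natAdd k c))) =
        fun _ => x ((σ * Fin.revPerm : Perm (Fin (k + 1))) 0) := by
    funext c
    rw [Fin.fin_one_eq_zero c]
    rfl
  have hshift := Equiv.sum_comp (Equiv.mulRight (Fin.revPerm : Perm (Fin (k + 1))))
    fun σ => F (fun _ => x (σ 0)) (fun _ => x (σ 0))
  simp only [coe_mulRight] at hshift
  simp only [hlast]
  rw [hshift, sum_perm_apply_zero fun m => F (fun _ => x m) (fun _ => x m)]
  simp

theorem KN_gpow_two_apply {k : ℕ} {x : Fin (k + 2) → V} (hx : Orthonormal ℝ x) (ω : DF V 2 2) :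
    2 * KN k 2 k 2 (gpow k) (rawDF ω) x x = k ! * ∑ a, ∑ b, rawDF ω ![x a, x b] ![x a, x b] := by
  rw [KN_gpow_apply_of_orthonormal hx _ (rawDF_apply_comp_perm ω)]
  -- the last two slots of `Fin (k + 2)` are `Fin.rev 1` and `Fin.rev 0`
  have hpair (σ : Perm (Fin (k + 2))) :
      (fun c : Fin 2 => x (σ (Fin.natAdd k c))) = ![x ((σ * Fin.revPerm : Perm (Fin (k + 2))) 1),
        x ((σ * Fin.revPerm : Perm (Fin (k + 2))) 0)] := by
    funext c
    fin_cases c <;> rfl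
  have hshift := Equiv.sum_comp (Equiv.mulRight (Fin.revPerm : Perm (Fin (k + 2))))
    fun σ => rawDF ω ![x (σ 1), x (σ 0)] ![x (σ 1), x (σ 0)]
  simp only [coe_mulRight] at hshift
  simp only [hpair]
  rw [hshift, sum_perm_apply_zero_one fun a b => rawDF ω ![x b, x a] ![x b, x a], sum_comm]
  simp [rawDF_apply_same]

lemma sum_castLE_eq_sum_filter {m n : ℕ} (h : m ≤ n) (g : Fin n → ℝ) :
    ∑ a : Fin m, g (Fin.castLE h a) = ∑ i ∈ univ.filter fun i : Fin n => (i : ℕ) < m, g i := by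
  have hmap : univ.map (Fin.castLEEmb h) = univ.filter fun i : Fin n => (i : ℕ) < m := by
    ext i
    simp only [mem_map, mem_univ, true_and, Fin.coe_castLEEmb, mem_filter]
    exact ⟨fun ⟨a, ha⟩ => ha ▸ a.isLt, fun hi => ⟨⟨i, hi⟩, rfl⟩⟩
  rw [← hmap, sum_map]
  rfl

lemma sum_ite_lt_and_le {p n : ℕ} (h : p ≤ n) (W : Fin n → Fin n → ℝ) :
    ∑ i : Fin n, ∑ j : Fin n, (if (i : ℕ) < p ∧ p ≤ (j : ℕ) then W i j else 0) =
      ∑ a : Fin p,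
        (∑ j, W (Fin.castLE h a) j - ∑ b : Fin p, W (Fin.castLE h a) (Fin.castLE h b)) := by
  simp_rw [sum_castLE_eq_sum_filter h]
  rw [sum_castLE_eq_sum_filter h
    fun i => ∑ j, W i j - ∑ j ∈ univ.filter fun j : Fin n => (j : ℕ) < p, W i j, sum_filter]
  refine sum_congr rfl fun i _ => ?_
  by_cases hi : (i : ℕ) < p
  · rw [if_pos hi, ← sum_filter_add_sum_filter_not univ (fun j : Fin n => (j : ℕ) < p) (W i),
      add_sub_cancel_left, sum_filter]
    simp [hi]
  · simp [hi]

lemma contr_apply_const (b : OrthonormalBasis (Fin n) ℝ V) (ω : DF V 2 2) (v : V) :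
    contr b 1 1 (rawDF ω) (fun _ => v) (fun _ => v) = ∑ j, rawDF ω ![v, b j] ![v, b j] := by
  refine sum_congr rfl fun j _ => ?_
  have hcons : (Fin.cons (b j) fun _ : Fin 1 => v : Fin 2 → V) = ![b j, v] := by
    funext c
    fin_cases c <;> rfl
  rw [hcons, rawDF_apply_swap]

variable (V)

/-- `Σ_{i=1}^p Σ_{j=p+1}^n ω(e_i∧e_j, e_i∧e_j)
= (g^{p−1}·(cω)/(p−1)! − 2 g^{p−2}·ω/(p−2)!)(e₁∧…∧e_p, e₁∧…∧e_p)`. -/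
theorem sectional_eq_product (n : ℕ) (b : OrthonormalBasis (Fin n) ℝ V)
    (ω : DF V 2 2)
    (p : ℕ) (hp2 : 2 ≤ p) (hpn : p ≤ n) :
    (∑ i : Fin n, ∑ j : Fin n,
        if (i : ℕ) < p ∧ p ≤ (j : ℕ) then rawDF ω ![b i, b j] ![b i, b j] else 0) =
      ((((p - 1).factorial : ℝ))⁻¹ •
          castDF (show (p - 1) + 1 = p by omega) (show (p - 1) + 1 = p by omega)
            (KN (p - 1) 1 (p - 1) 1 (gpow (p - 1)) (contr b 1 1 (rawDF ω)))
        - (2 : ℝ) • (((p - 2).factorial : ℝ))⁻¹ •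
          castDF (show (p - 2) + 2 = p by omega) (show (p - 2) + 2 = p by omega)
            (KN (p - 2) 2 (p - 2) 2 (gpow (p - 2)) (rawDF ω)))
        (fun a => b (Fin.castLE hpn a)) (fun a => b (Fin.castLE hpn a)) := by
  obtain ⟨q, rfl⟩ : ∃ q, p = q + 2 := ⟨p - 2, by omega⟩
  set x : Fin (q + 2) → V := fun a => b (Fin.castLE hpn a)
  have hx : Orthonormal ℝ x := b.orthonormal.comp _ (Fin.castLE_injective hpn)
  change _ = ((q + 1)! : ℝ)⁻¹ * KN (q + 1) 1 (q + 1) 1 (gpow (q + 1)) (contr b 1 1 (rawDF ω)) x x -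
    2 * ((q ! : ℝ)⁻¹ * KN q 2 q 2 (gpow q) (rawDF ω) x x)
  rw [mul_left_comm 2, KN_gpow_one_apply hx, KN_gpow_two_apply hx, sum_ite_lt_and_le hpn]
  simp only [contr_apply_const]
  field_simp
  exact sum_sub_distrib _ _

end Weitzenbock
end
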